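/- For any majorant w and any positive integer n_0 > 0, there exists a strictly increasing sequence of positive integers {n_k}_{k≥0} starting at n_0 such that: (1) there exists β > 0 with sup_{k≥0} w(2^{−n_k})^β / w(2^{−n_{k+1}}) < ∞ (so that ∪_k D_{n_k} is a dyadic w-grid); and (2) w(2^{−n_{k+1}}) ≤ Π_{j=0}^{k} w(2^{−n_j}) for all k ≥ 0. -/

import Mathlib

open MeasureTheory Filter Topology
open scoped ENNReal

noncomputable section

/-- Normalized Lebesgue (arclength) measure `m` on the unit circle `∂𝔻`,
realized as a measure on `ℂ`. -/
def circleM : Measure ℂ :=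
  (ENNReal.ofReal (2 * Real.pi))⁻¹ •
    Measure.map (fun t : ℝ => Complex.exp (t * Complex.I))
      (volume.restrict (Set.Ioc 0 (2 * Real.pi)))

/-- A modulus of continuity: a continuous, non-decreasing, subadditive function on `[0,1]`
vanishing at `0`. -/
def IsModulusOfContinuity (w : ℝ → ℝ) : Prop :=
  ContinuousOn w (Set.Icc 0 1) ∧ MonotoneOn w (Set.Icc 0 1) ∧ w 0 = 0 ∧
    ∀ s t : ℝ, 0 ≤ s → 0 ≤ t → s + t ≤ 1 → w (s + t) ≤ w s + w t

/-- A majorant: a continuous non-decreasing function on `[0,1]` with `w 0 = 0` such that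
`w ^ λ` is a modulus of continuity for some `λ > 0`. -/
def IsMajorant (w : ℝ → ℝ) : Prop :=
  ContinuousOn w (Set.Icc 0 1) ∧ MonotoneOn w (Set.Icc 0 1) ∧ w 0 = 0 ∧
    ∃ lam : ℝ, 0 < lam ∧ IsModulusOfContinuity fun t => w t ^ lam

/-- Condition `(A₁)`: `log (1/w t) ≍ log (1/w (t²))` on `(0,1)`. -/
def CondA1 (w : ℝ → ℝ) : Prop :=
  ∃ c : ℝ, 0 < c ∧ ∀ t : ℝ, 0 < t → t < 1 →
    c⁻¹ * Real.log (1 / w (t ^ 2)) ≤ Real.log (1 / w t) ∧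
      Real.log (1 / w t) ≤ c * Real.log (1 / w (t ^ 2))

/-- Condition `(A₂)` with exponent `α`: `w ^ (1+α)` is a modulus of continuity and
`∫₀¹ w(t)^α dt/t < ∞`. -/
def CondA2 (w : ℝ → ℝ) (α : ℝ) : Prop :=
  0 < α ∧ α < 1 ∧ (IsModulusOfContinuity fun t => w t ^ (1 + α)) ∧
    IntegrableOn (fun t => w t ^ α / t) (Set.Ioo (0 : ℝ) 1) volume

/-- The growth-space norm `‖g‖_{G_w} = sup_{z ∈ 𝔻} w(1-|z|) |g z|` (with value in `ℝ≥0∞`). -/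
def gwNorm (w : ℝ → ℝ) (g : ℂ → ℂ) : ℝ≥0∞ :=
  ⨆ z ∈ Metric.ball (0 : ℂ) 1, ENNReal.ofReal (w (1 - ‖z‖) * ‖g z‖)

/-- Membership in `[g]_{G_w}`, the smallest closed shift-invariant subspace of `G_w`
containing `g`: `f` is a `G_w`-norm limit of polynomial multiples of `g`. -/
def memInvGen (w : ℝ → ℝ) (g f : ℂ → ℂ) : Prop :=
  ∃ Q : ℕ → Polynomial ℂ,
    Tendsto (fun n => gwNorm w fun z => g z * (Q n).eval z - f z) atTop (𝓝 0)

/-- Membership in the growth space `G_w`: an analytic function on `𝔻` which is a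
`G_w`-norm limit of analytic polynomials. -/
def memGw (w : ℝ → ℝ) (f : ℂ → ℂ) : Prop :=
  DifferentiableOn ℂ f (Metric.ball (0 : ℂ) 1) ∧
    ∃ Q : ℕ → Polynomial ℂ,
      Tendsto (fun n => gwNorm w fun z => (Q n).eval z - f z) atTop (𝓝 0)

/-- `g` is cyclic in `G_w`: `[g]_{G_w} = G_w`. -/
def cyclicGw (w : ℝ → ℝ) (g : ℂ → ℂ) : Prop :=
  ∀ f : ℂ → ℂ, memGw w f → memInvGen w g f

/-- Bounded analytic functions on the unit disc. -/
def memHinf (f : ℂ → ℂ) : Prop :=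
  DifferentiableOn ℂ f (Metric.ball (0 : ℂ) 1) ∧
    ∃ C : ℝ, ∀ z ∈ Metric.ball (0 : ℂ) 1, ‖f z‖ ≤ C

/-- The singular inner function `S_μ (z) = exp (-∫ (ζ+z)/(ζ-z) dμ(ζ))`. -/
def singInner (μ : Measure ℂ) (z : ℂ) : ℂ :=
  Complex.exp (-∫ ζ, (ζ + z) / (ζ - z) ∂μ)

/-- A measure on `ℂ` carried by the unit circle and singular with respect to
normalized Lebesgue measure `m` on the circle. -/
def circleSingular (μ : Measure ℂ) : Prop :=
  μ (Metric.sphere (0 : ℂ) 1)ᶜ = 0 ∧ Measure.MutuallySingular μ circleM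

/-- Normalized arclength distance from a point of the circle to a set `E` on the circle. -/
def circleDist (ζ : ℂ) (E : Set ℂ) : ℝ :=
  sInf ((fun ξ => |Complex.arg (ζ * (starRingEnd ℂ) ξ)| / (2 * Real.pi)) '' E)

/-- A closed subset of the circle of Lebesgue measure zero has finite `w`-entropy if
`∫ log w (dist (ζ, E)) dm(ζ) > -∞`, i.e. the integrand is integrable. -/
def finiteEntropy (w : ℝ → ℝ) (E : Set ℂ) : Prop :=
  E ⊆ Metric.sphere (0 : ℂ) 1 ∧ IsClosed E ∧ circleM E = 0 ∧
    Integrable (fun ζ => Real.log (w (circleDist ζ E))) circleM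

/-- The `w`-entropy decomposition `μ = μ_P + μ_C`: `μ_P` is concentrated on a countable
union of sets of finite `w`-entropy, and `μ_C` does not charge any set of finite
`w`-entropy. -/
def entropyDecomp (w : ℝ → ℝ) (μ μP μC : Measure ℂ) : Prop :=
  μ = μP + μC ∧
    (∃ E : ℕ → Set ℂ, (∀ n, finiteEntropy w (E n)) ∧ μP (⋃ n, E n)ᶜ = 0) ∧
    ∀ E : Set ℂ, finiteEntropy w E → μC E = 0

/-- Outer functions: `f z = exp (∫ (ζ+z)/(ζ-z) u(ζ) dm(ζ))` where `u = log |f|` on `∂𝔻`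
(in the sense of radial limits) is integrable. -/
def isOuter (f : ℂ → ℂ) : Prop :=
  DifferentiableOn ℂ f (Metric.ball (0 : ℂ) 1) ∧
    ∃ u : ℂ → ℝ, Integrable u circleM ∧
      (∀ z ∈ Metric.ball (0 : ℂ) 1,
        f z = Complex.exp (∫ ζ, ((ζ + z) / (ζ - z)) * (u ζ : ℂ) ∂circleM)) ∧
      ∀ᵐ ζ ∂circleM,
        Tendsto (fun r : ℝ => Real.log ‖f (r • ζ)‖) (𝓝[<] (1 : ℝ)) (𝓝 (u ζ))

/-- A single Blaschke factor for a zero `a ∈ 𝔻` (with the convention that parameters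
outside the open disc contribute the trivial factor `1`, so that finite Blaschke
products are included). -/
def blaschkeFactor (a z : ℂ) : ℂ :=
  if ‖a‖ < 1 then
    if a = 0 then z else ((‖a‖ : ℂ) / a) * ((a - z) / (1 - (starRingEnd ℂ) a * z))
  else 1

/-- The Blaschke product `B_Λ` with unimodular constant `e^{iγ}`. -/
def blaschkeProd (γ : ℝ) (Λ : ℕ → ℂ) (z : ℂ) : ℂ :=
  Complex.exp (γ * Complex.I) * ∏' n, blaschkeFactor (Λ n) z

/-- The Blaschke condition `∑ (1 - |λ|) < ∞` over the zeros in the open disc. -/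
def blaschkeSeq (Λ : ℕ → ℂ) : Prop :=
  Summable fun n => if ‖Λ n‖ < 1 then 1 - ‖Λ n‖ else 0

/-- The Smirnov class `N⁺`: quotients `u / v` with `u, v ∈ H^∞` and `v` outer. -/
def memSmirnov (g : ℂ → ℂ) : Prop :=
  ∃ u v : ℂ → ℂ, memHinf u ∧ memHinf v ∧ isOuter v ∧
    ∀ z ∈ Metric.ball (0 : ℂ) 1, g z * v z = u z

/-- The Nevanlinna class `N`: `sup_{0<r<1} ∫ log⁺ |f (rζ)| dm(ζ) < ∞`. -/
def memNevanlinna (f : ℂ → ℂ) : Prop :=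
  DifferentiableOn ℂ f (Metric.ball (0 : ℂ) 1) ∧
    ∃ C : ℝ≥0∞, C ≠ ⊤ ∧ ∀ r : ℝ, 0 < r → r < 1 →
      (∫⁻ ζ, ENNReal.ofReal (Real.log ‖f (r • ζ)‖) ∂circleM) ≤ C

/-- The Hardy space `H²`: analytic on `𝔻` with bounded quadratic means on circles. -/
def memH2 (f : ℂ → ℂ) : Prop :=
  DifferentiableOn ℂ f (Metric.ball (0 : ℂ) 1) ∧
    ∃ C : ℝ, ∀ r : ℝ, 0 ≤ r → r < 1 → (∫ ζ, ‖f (r • ζ)‖ ^ 2 ∂circleM) ≤ C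

/-- The squared `H²`-norm: `sup_{0≤r<1} ∫ |f (rζ)|² dm(ζ)`. -/
def h2normSq (f : ℂ → ℂ) : ℝ :=
  ⨆ r : Set.Ico (0 : ℝ) 1, ∫ ζ, ‖f ((r : ℝ) • ζ)‖ ^ 2 ∂circleM

/-- Inner functions: bounded analytic on `𝔻` with unimodular radial limits a.e. -/
def isInner (Θ : ℂ → ℂ) : Prop :=
  memHinf Θ ∧
    ∀ᵐ ζ ∂circleM, Tendsto (fun r : ℝ => ‖Θ (r • ζ)‖) (𝓝[<] (1 : ℝ)) (𝓝 1)

/-- Membership in the model space `K_Θ = H² ⊖ Θ H²`: an `H²` function orthogonal to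
`Θ zⁿ` for every `n ≥ 0`, in the sense of radial boundary pairings. -/
def memKTheta (Θ f : ℂ → ℂ) : Prop :=
  memH2 f ∧ ∀ n : ℕ,
    Tendsto
      (fun r : ℝ => ∫ ζ, f (r • ζ) * (starRingEnd ℂ) (Θ (r • ζ) * (r • ζ) ^ n) ∂circleM)
      (𝓝[<] (1 : ℝ)) (𝓝 0)

/-- `C_w(∂𝔻)`: continuous functions on the circle with modulus of continuity
dominated by a constant multiple of `w`. -/
def memCw (w : ℝ → ℝ) (f : ℂ → ℂ) : Prop :=
  ContinuousOn f (Metric.sphere (0 : ℂ) 1) ∧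
    ∃ C : ℝ, ∀ ξ ∈ Metric.sphere (0 : ℂ) 1, ∀ ζ ∈ Metric.sphere (0 : ℂ) 1,
      ‖f ξ - f ζ‖ ≤ C * w ‖ξ - ζ‖

/-- `A_w = H^∞ ∩ C_w(∂𝔻)`: bounded analytic functions on `𝔻` extending continuously to
`∂𝔻` with boundary modulus of continuity dominated by `w`. -/
def memAw (w : ℝ → ℝ) (f : ℂ → ℂ) : Prop :=
  DifferentiableOn ℂ f (Metric.ball (0 : ℂ) 1) ∧
    ContinuousOn f (Metric.closedBall (0 : ℂ) 1) ∧
    ∃ C : ℝ, ∀ ξ ∈ Metric.sphere (0 : ℂ) 1, ∀ ζ ∈ Metric.sphere (0 : ℂ) 1,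
      ‖f ξ - f ζ‖ ≤ C * w ‖ξ - ζ‖

/-- The `A_w` norm `‖f‖_{H^∞} + sup_{ξ,ζ∈∂𝔻} |f ξ - f ζ| / w (|ξ - ζ|)`. -/
def awNorm (w : ℝ → ℝ) (f : ℂ → ℂ) : ℝ :=
  (⨆ z : Metric.closedBall (0 : ℂ) 1, ‖f (z : ℂ)‖) +
    ⨆ p : Metric.sphere (0 : ℂ) 1 × Metric.sphere (0 : ℂ) 1,
      ‖f (p.1 : ℂ) - f (p.2 : ℂ)‖ / w ‖(p.1 : ℂ) - (p.2 : ℂ)‖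

/-- The `C_w(∂𝔻)` norm. -/
def cwNorm (w : ℝ → ℝ) (f : ℂ → ℂ) : ℝ :=
  (⨆ z : Metric.sphere (0 : ℂ) 1, ‖f (z : ℂ)‖) +
    ⨆ p : Metric.sphere (0 : ℂ) 1 × Metric.sphere (0 : ℂ) 1,
      ‖f (p.1 : ℂ) - f (p.2 : ℂ)‖ / w ‖(p.1 : ℂ) - (p.2 : ℂ)‖

/-- The Cauchy projection `P₊ f (z) = ∫ f(ζ) / (1 - conj ζ · z) dm(ζ)`. -/
def cauchyProj (f : ℂ → ℂ) (z : ℂ) : ℂ :=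
  ∫ ζ, f ζ / (1 - (starRingEnd ℂ) ζ * z) ∂circleM

/-- The open arc `{e^{it} : a < t < b}` of the unit circle. -/
def circleArc (a b : ℝ) : Set ℂ :=
  (fun t : ℝ => Complex.exp (t * Complex.I)) '' Set.Ioo a b

/-- The closed arc `{e^{it} : a ≤ t ≤ b}` of the unit circle. -/
def circleArcC (a b : ℝ) : Set ℂ :=
  (fun t : ℝ => Complex.exp (t * Complex.I)) '' Set.Icc a b

/-- The Privalov star-domain `Ω = {rζ : ζ ∈ ∂𝔻, 0 ≤ r < 1 - h(ζ)}` associated with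
a boundary height function `h`. -/
def privalovStar (h : ℂ → ℝ) : Set ℂ :=
  {z : ℂ | z = 0 ∨ ‖z‖ < 1 - h (‖z‖⁻¹ • z)}

end

/-- Lemma 2.3: existence of a dyadic `w`-grid with the
super-lacunary property. -/
theorem exists_dyadic_w_grid
    (w : ℝ → ℝ) (hw : IsMajorant w) (n₀ : ℕ) (hn₀ : 0 < n₀) :
    ∃ n : ℕ → ℕ, n 0 = n₀ ∧ StrictMono n ∧
      (∃ β : ℝ, 0 < β ∧ ∃ M : ℝ, ∀ k : ℕ,
        w ((2 : ℝ) ^ (-(n k : ℤ))) ^ β / w ((2 : ℝ) ^ (-(n (k + 1) : ℤ))) ≤ M) ∧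
      ∀ k : ℕ, w ((2 : ℝ) ^ (-(n (k + 1) : ℤ))) ≤
        ∏ j ∈ Finset.range (k + 1), w ((2 : ℝ) ^ (-(n j : ℤ))) := by
  classical
  obtain ⟨hwc, hwm, hw0, lam, hlam, -, -, -, hsub⟩ := hw
  set a : ℕ → ℝ := fun j => w ((2:ℝ) ^ (-(j:ℤ))) with ha_def
  have hmem : ∀ j : ℕ, (2:ℝ) ^ (-(j:ℤ)) ∈ Set.Icc (0:ℝ) 1 := by
    intro j
    refine ⟨by positivity, ?_⟩
    have : (2:ℝ) ^ (-(j:ℤ)) ≤ (2:ℝ) ^ (0:ℤ) :=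
      zpow_le_zpow_right₀ one_le_two (by omega)
    simpa using this
  have ha0 : ∀ j : ℕ, 0 ≤ a j := by
    intro j
    have := hwm (Set.mem_Icc.mpr ⟨le_refl 0, zero_le_one⟩) (hmem j) (hmem j).1
    simpa [hw0, ha_def] using this
  have hanti : ∀ i j : ℕ, i ≤ j → a j ≤ a i := by
    intro i j hij
    exact hwm (hmem j) (hmem i) (zpow_le_zpow_right₀ one_le_two (by omega))
  have hdbl : ∀ m : ℕ, a m ≤ (2:ℝ) ^ (lam⁻¹) * a (m+1) := by
    intro m
    have hs : (2:ℝ) ^ (-((m+1:ℕ):ℤ)) + (2:ℝ) ^ (-((m+1:ℕ):ℤ)) = (2:ℝ) ^ (-(m:ℤ)) := by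
      rw [← two_mul, show (-(m:ℤ)) = 1 + (-((m+1:ℕ):ℤ)) by push_cast; ring,
        zpow_add₀ (two_ne_zero : (2:ℝ) ≠ 0)]
      norm_num
    have h1 := hsub ((2:ℝ) ^ (-((m+1:ℕ):ℤ))) ((2:ℝ) ^ (-((m+1:ℕ):ℤ)))
      (hmem (m+1)).1 (hmem (m+1)).1 (by rw [hs]; exact (hmem m).2)
    rw [hs] at h1
    have h2 : a m ^ lam ≤ 2 * a (m+1) ^ lam := by
      rw [two_mul]
      exact h1
    have h3 := Real.rpow_le_rpow (Real.rpow_nonneg (ha0 m) lam) h2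
      (inv_nonneg.mpr hlam.le)
    rwa [Real.rpow_rpow_inv (ha0 m) hlam.ne',
      Real.mul_rpow zero_le_two (Real.rpow_nonneg (ha0 (m+1)) lam),
      Real.rpow_rpow_inv (ha0 (m+1)) hlam.ne'] at h3
  have htend : Tendsto a atTop (𝓝 0) := by
    have h1 : Tendsto (fun j : ℕ => (2:ℝ) ^ (-(j:ℤ))) atTop (𝓝 0) := by
      simp only [zpow_neg, zpow_natCast, ← inv_pow]
      exact tendsto_pow_atTop_nhds_zero_of_lt_one (by norm_num) (by norm_num)
    have h2 : Tendsto (fun j : ℕ => (2:ℝ) ^ (-(j:ℤ))) atTop (𝓝[Set.Icc (0:ℝ) 1] 0) :=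
      tendsto_nhdsWithin_of_tendsto_nhds_of_eventually_within _ h1
        (Filter.Eventually.of_forall hmem)
    have h3 := (hwc 0 (Set.mem_Icc.mpr ⟨le_refl 0, zero_le_one⟩)).tendsto.comp h2
    simpa [hw0, Function.comp_def, ha_def] using h3
  have hex : ∀ j : ℕ, ∃ m : ℕ, j < m ∧ a m ≤ a j ^ 2 := by
    intro j
    rcases eq_or_lt_of_le (ha0 j) with h0 | h0
    · refine ⟨j + 1, Nat.lt_succ_self j, ?_⟩
      have := hanti j (j+1) (Nat.le_succ j)
      nlinarith [ha0 (j+1)]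
    · have hev : ∀ᶠ m in atTop, a m < a j ^ 2 :=
        htend.eventually_lt_const (by positivity)
      obtain ⟨m, hm1, hm2⟩ := ((Filter.eventually_gt_atTop j).and hev).exists
      exact ⟨m, hm1, hm2.le⟩
  let n : ℕ → ℕ := fun k => Nat.rec n₀ (fun _ p => @Nat.find _ (Classical.decPred _) (hex p)) k
  have hnsucc : ∀ k, n (k+1) = @Nat.find _ (Classical.decPred _) (hex (n k)) := fun _ => rfl
  have hspec : ∀ k, n k < n (k+1) ∧ a (n (k+1)) ≤ a (n k) ^ 2 := by
    intro k
    rw [hnsucc]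
    exact @Nat.find_spec _ (Classical.decPred _) (hex (n k))
  have hmin : ∀ k m, n k < m → m < n (k + 1) → a (n k) ^ 2 < a m := by
    intro k m h1 h2
    rw [hnsucc] at h2
    have h3 := @Nat.find_min _ (Classical.decPred _) (hex (n k)) _ h2
    push_neg at h3
    exact h3 h1
  have hsm : StrictMono n := strictMono_nat_of_lt_succ fun k => (hspec k).1
  have hprod : ∀ k : ℕ, a (n (k+1)) ≤ ∏ j ∈ Finset.range (k+1), a (n j) := by
    intro k
    induction k with
    | zero => simpa using hanti (n 0) (n 1) (hsm.monotone (Nat.le_succ 0))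
    | succ k ih =>
      rw [Finset.prod_range_succ]
      calc a (n (k+2)) ≤ a (n (k+1)) ^ 2 := (hspec (k+1)).2
        _ = a (n (k+1)) * a (n (k+1)) := sq (a (n (k+1)))
        _ ≤ (∏ j ∈ Finset.range (k+1), a (n j)) * a (n (k+1)) :=
            mul_le_mul_of_nonneg_right ih (ha0 _)
  set C : ℝ := (2:ℝ) ^ (lam⁻¹) with hCdef
  have hC0 : 0 < C := Real.rpow_pos_of_pos two_pos _
  have hM0 : 0 ≤ C * (a n₀ + 1) := by
    have := ha0 n₀
    nlinarith
  refine ⟨n, rfl, hsm, ⟨2, two_pos, C * (a n₀ + 1), ?_⟩, fun k => hprod k⟩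
  intro k
  show a (n k) ^ (2:ℝ) / a (n (k+1)) ≤ C * (a n₀ + 1)
  rcases eq_or_lt_of_le (ha0 (n (k+1))) with hd | hd
  · rw [← hd, div_zero]
    exact hM0
  rw [div_le_iff₀ hd]
  have h2 : a (n k) ^ (2:ℝ) = a (n k) ^ (2:ℕ) := by
    rw [← Real.rpow_natCast]
    norm_num
  rw [h2]
  rcases eq_or_lt_of_le (Nat.succ_le_of_lt (hspec k).1) with he | he
  · -- n (k+1) = n k + 1
    have hdb := hdbl (n k)
    rw [show n k + 1 = n (k+1) from he] at hdb
    have h4 : a (n k) ≤ a n₀ := hanti (n 0) (n k) (hsm.monotone (Nat.zero_le k))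
    have h5 : a (n k) ^ 2 ≤ a n₀ * (C * a (n (k+1))) := by
      rw [pow_two]
      exact mul_le_mul h4 hdb (ha0 _) (ha0 _)
    calc a (n k) ^ 2 ≤ a n₀ * (C * a (n (k+1))) := h5
      _ ≤ C * (a n₀ + 1) * a (n (k+1)) := by nlinarith [ha0 n₀, hd.le]
  · -- n k + 1 < n (k+1)
    have hmin' := hmin k (n (k+1) - 1) (by omega) (by omega)
    have hdb := hdbl (n (k+1) - 1)
    rw [show n (k+1) - 1 + 1 = n (k+1) by omega] at hdb
    calc a (n k) ^ 2 ≤ a (n (k+1) - 1) := hmin'.le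
      _ ≤ C * a (n (k+1)) := hdb
      _ ≤ C * (a n₀ + 1) * a (n (k+1)) := by nlinarith [ha0 n₀, hd.le]
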